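/- Let ρ_x, σ_x, ρ_y, σ_y be m×m density matrices (positive semidefinite with trace 1). If ‖ρ_x − σ_x‖₁ ≥ 4/3 and ‖ρ_y − σ_y‖₁ ≤ 2/3, then ‖ρ_x ⊗ σ_x − ρ_y ⊗ σ_y‖₁ ≥ 1/3, where ⊗ denotes the Kronecker product. (In trace-distance normalization: if the trace distance between ρ_x and σ_x is at least 2/3 and the trace distance between ρ_y and σ_y is at most 1/3, then ρ_x ⊗ σ_x and ρ_y ⊗ σ_y are at trace distance at least 1/6.) -/

import Mathlib

/-!
For Hermitian `X`, `‖X‖₁ = max {2 Re tr (M X) - Re tr X | 0 ≤ M ≤ 1}`, since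
`2 Re tr (M X) ≤ 2 tr X⁺ = tr |X| + tr X`, with equality at the spectral projection onto the
nonnegative part of `X`. This variational formula gives the triangle inequality, and it gives
`‖A - C‖₁ ≤ ‖A ⊗ B - C ⊗ D‖₁` for unit-trace `B` and `D`, because the effect `M ⊗ 1` sees
`A ⊗ B - C ⊗ D` exactly as `M` sees `A - C` (the trace norm contracts under partial trace).
With `a = ‖ρx - ρy‖₁` and `b = ‖σx - σy‖₁`, the triangle inequality gives `4/3 ≤ a + 2/3 + b`,
and both `a` and `b` are at most `‖ρx ⊗ σx - ρy ⊗ σy‖₁`.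
-/

open scoped ComplexOrder

/-- The trace norm of a complex square matrix `A`: the trace of `√(Aᴴ A)`
(equivalently, the sum of the singular values of `A`). -/
noncomputable def traceNorm {m : Type*} [Fintype m] [DecidableEq m] (A : Matrix m m ℂ) : ℝ :=
  ((Matrix.posSemidef_conjTranspose_mul_self A).1.eigenvectorUnitary.1 *
    Matrix.diagonal (((↑) : ℝ → ℂ) ∘ (√·) ∘ (Matrix.posSemidef_conjTranspose_mul_self A).1.eigenvalues) *
    (star (Matrix.posSemidef_conjTranspose_mul_self A).1.eigenvectorUnitary : Matrix m m ℂ)).trace.re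

open Matrix Kronecker
open scoped MatrixOrder

section

variable {𝕜 n p : Type*} [RCLike 𝕜]

theorem Matrix.trace_mul_nonneg [Fintype n] [DecidableEq n] {A B : Matrix n n 𝕜} (hA : 0 ≤ A)
    (hB : 0 ≤ B) : 0 ≤ (A * B).trace := by
  obtain ⟨C, rfl⟩ := CStarAlgebra.nonneg_iff_eq_star_mul_self.mp hB
  rw [← Matrix.mul_assoc, trace_mul_comm, ← Matrix.mul_assoc]
  exact ((nonneg_iff_posSemidef.mp hA).mul_mul_conjTranspose_same C).trace_nonneg

theorem Matrix.IsHermitian.kronecker {A : Matrix n n 𝕜} {B : Matrix p p 𝕜}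
    (hA : A.IsHermitian) (hB : B.IsHermitian) : (A ⊗ₖ B).IsHermitian := by
  rw [IsHermitian, conjTranspose_kronecker, hA.eq, hB.eq]

theorem Matrix.one_sub_kronecker_one [DecidableEq n] [DecidableEq p] (M : Matrix n n 𝕜) :
    (1 : Matrix (n × p) (n × p) 𝕜) - M ⊗ₖ 1 = (1 - M) ⊗ₖ 1 := by
  rw [sub_eq_iff_eq_add, ← add_kronecker, sub_add_cancel, one_kronecker_one]

theorem Matrix.one_sub_one_kronecker [DecidableEq n] [DecidableEq p] (M : Matrix p p 𝕜) :
    (1 : Matrix (n × p) (n × p) 𝕜) - 1 ⊗ₖ M = 1 ⊗ₖ (1 - M) := by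
  rw [sub_eq_iff_eq_add, ← kronecker_add, sub_add_cancel, one_kronecker_one]

end

section

variable {n p : Type*} [Fintype n] [DecidableEq n] [Fintype p] [DecidableEq p]

theorem traceNorm_eq_re_trace_abs (A : Matrix n n ℂ) : traceNorm A = (CFC.abs A).trace.re := by
  rw [CFC.abs, star_eq_conjTranspose,
    CFC.sqrt_eq_real_sqrt _ (posSemidef_conjTranspose_mul_self A).nonneg,
    cfcₙ_eq_cfc (hf0 := Real.sqrt_zero), (posSemidef_conjTranspose_mul_self A).1.cfc_eq]
  rfl

theorem traceNorm_neg (A : Matrix n n ℂ) : traceNorm (-A) = traceNorm A := by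
  simp only [traceNorm_eq_re_trace_abs, CFC.abs_neg]

theorem traceNorm_sub_comm (A B : Matrix n n ℂ) : traceNorm (A - B) = traceNorm (B - A) := by
  rw [← traceNorm_neg, neg_sub]

namespace Matrix.IsHermitian

variable {X : Matrix n n ℂ}

theorem traceNorm_add_re_trace (hX : X.IsHermitian) :
    traceNorm X + X.trace.re = 2 * (X⁺).trace.re := by
  rw [traceNorm_eq_re_trace_abs, ← Complex.add_re, ← trace_add,
    CFC.abs_add_self X hX.isSelfAdjoint, two_smul, trace_add, Complex.add_re, two_mul]

theorem two_mul_re_trace_mul_le (hX : X.IsHermitian) {M : Matrix n n ℂ} (hM₀ : 0 ≤ M)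
    (hM₁ : M ≤ 1) : 2 * (M * X).trace.re ≤ traceNorm X + X.trace.re := by
  have hMX : (M * X).trace = X⁺.trace - ((1 - M) * X⁺).trace - (M * X⁻).trace := by
    rw [sub_mul, one_mul, trace_sub, sub_sub_cancel, ← trace_sub, ← mul_sub,
      CFC.posPart_sub_negPart X hX.isSelfAdjoint]
  have h₁ := Complex.nonneg_iff.mp (trace_mul_nonneg (sub_nonneg.mpr hM₁) (CFC.posPart_nonneg X))
  have h₂ := Complex.nonneg_iff.mp (trace_mul_nonneg hM₀ (CFC.negPart_nonneg X))
  rw [hX.traceNorm_add_re_trace, hMX, Complex.sub_re, Complex.sub_re]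
  linarith [h₁.1, h₂.1]

theorem cfc_nonneg_indicator_mul_self (hX : X.IsHermitian) :
    cfc (fun x : ℝ ↦ if 0 ≤ x then (1 : ℝ) else 0) X * X = X⁺ := by
  nth_rewrite 2 [← cfc_id' ℝ X hX.isSelfAdjoint]
  rw [← cfc_mul _ _ _ (X.finite_real_spectrum.continuousOn _), CFC.posPart_def, cfcₙ_eq_cfc]
  refine cfc_congr fun x _ ↦ ?_
  split_ifs with h
  · simp [posPart_eq_self.mpr h]
  · simp [posPart_eq_zero.mpr (le_of_not_ge h)]

theorem exists_two_mul_re_trace_mul_eq (hX : X.IsHermitian) :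
    ∃ M : Matrix n n ℂ, 0 ≤ M ∧ M ≤ 1 ∧ 2 * (M * X).trace.re = traceNorm X + X.trace.re := by
  refine ⟨cfc (fun x : ℝ ↦ if 0 ≤ x then (1 : ℝ) else 0) X, cfc_nonneg fun x _ ↦ ?_,
    cfc_le_one _ _ fun x _ ↦ ?_, ?_⟩
  · split_ifs <;> norm_num
  · split_ifs <;> norm_num
  · rw [hX.cfc_nonneg_indicator_mul_self, hX.traceNorm_add_re_trace]

theorem traceNorm_add_le (hX : X.IsHermitian) {Y : Matrix n n ℂ} (hY : Y.IsHermitian) :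
    traceNorm (X + Y) ≤ traceNorm X + traceNorm Y := by
  obtain ⟨M, hM₀, hM₁, hM⟩ := (hX.add hY).exists_two_mul_re_trace_mul_eq
  have hX' := hX.two_mul_re_trace_mul_le hM₀ hM₁
  have hY' := hY.two_mul_re_trace_mul_le hM₀ hM₁
  rw [mul_add, trace_add, trace_add, Complex.add_re, Complex.add_re] at hM
  linarith

theorem traceNorm_le_of_forall_exists_trace_mul_eq (hX : X.IsHermitian) {Y : Matrix p p ℂ}
    (hY : Y.IsHermitian) (htr : Y.trace = X.trace)
    (h : ∀ M : Matrix n n ℂ, 0 ≤ M → M ≤ 1 →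
      ∃ W : Matrix p p ℂ, 0 ≤ W ∧ W ≤ 1 ∧ (W * Y).trace = (M * X).trace) :
    traceNorm X ≤ traceNorm Y := by
  obtain ⟨M, hM₀, hM₁, hM⟩ := hX.exists_two_mul_re_trace_mul_eq
  obtain ⟨W, hW₀, hW₁, hW⟩ := h M hM₀ hM₁
  have hY' := hY.two_mul_re_trace_mul_le hW₀ hW₁
  rw [hW, htr] at hY'
  linarith

end Matrix.IsHermitian

variable {A C : Matrix n n ℂ} {B D : Matrix p p ℂ}

theorem traceNorm_sub_le_traceNorm_kronecker_sub_left (hA : A.IsHermitian) (hC : C.IsHermitian)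
    (hB : B.IsHermitian) (hD : D.IsHermitian) (hB₁ : B.trace = 1) (hD₁ : D.trace = 1) :
    traceNorm (A - C) ≤ traceNorm (A ⊗ₖ B - C ⊗ₖ D) := by
  refine (hA.sub hC).traceNorm_le_of_forall_exists_trace_mul_eq
    ((hA.kronecker hB).sub (hC.kronecker hD)) ?_ fun M hM₀ hM₁ ↦ ⟨M ⊗ₖ 1, ?_, ?_, ?_⟩
  · rw [trace_sub, trace_kronecker, trace_kronecker, hB₁, hD₁, mul_one, mul_one, trace_sub]
  · exact nonneg_iff_posSemidef.mpr ((nonneg_iff_posSemidef.mp hM₀).kronecker PosSemidef.one)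
  · rw [le_iff, one_sub_kronecker_one]
    exact (le_iff.mp hM₁).kronecker PosSemidef.one
  · rw [mul_sub, ← mul_kronecker_mul, ← mul_kronecker_mul, one_mul, one_mul, trace_sub,
      trace_kronecker, trace_kronecker, hB₁, hD₁, mul_one, mul_one, mul_sub, trace_sub]

theorem traceNorm_sub_le_traceNorm_kronecker_sub_right (hA : A.IsHermitian) (hC : C.IsHermitian)
    (hB : B.IsHermitian) (hD : D.IsHermitian) (hA₁ : A.trace = 1) (hC₁ : C.trace = 1) :
    traceNorm (B - D) ≤ traceNorm (A ⊗ₖ B - C ⊗ₖ D) := by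
  refine (hB.sub hD).traceNorm_le_of_forall_exists_trace_mul_eq
    ((hA.kronecker hB).sub (hC.kronecker hD)) ?_ fun M hM₀ hM₁ ↦ ⟨1 ⊗ₖ M, ?_, ?_, ?_⟩
  · rw [trace_sub, trace_kronecker, trace_kronecker, hA₁, hC₁, one_mul, one_mul, trace_sub]
  · exact nonneg_iff_posSemidef.mpr (PosSemidef.one.kronecker (nonneg_iff_posSemidef.mp hM₀))
  · rw [le_iff, one_sub_one_kronecker]
    exact PosSemidef.one.kronecker (le_iff.mp hM₁)
  · rw [mul_sub, ← mul_kronecker_mul, ← mul_kronecker_mul, one_mul, one_mul, trace_sub,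
      trace_kronecker, trace_kronecker, hA₁, hC₁, one_mul, one_mul, mul_sub, trace_sub]

end

open Kronecker in
theorem traceNorm_kron_pair_ge_of_far_and_close {m : Type*} [Fintype m] [DecidableEq m]
    (ρx σx ρy σy : Matrix m m ℂ)
    (hρx : ρx.PosSemidef) (hρxt : ρx.trace = 1)
    (hσx : σx.PosSemidef) (hσxt : σx.trace = 1)
    (hρy : ρy.PosSemidef) (hρyt : ρy.trace = 1)
    (hσy : σy.PosSemidef) (hσyt : σy.trace = 1)
    (hfar : traceNorm (ρx - σx) ≥ 4 / 3) (hclose : traceNorm (ρy - σy) ≤ 2 / 3) :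
    traceNorm (ρx ⊗ₖ σx - ρy ⊗ₖ σy) ≥ 1 / 3 := by
  have htriangle₁ := (hρx.1.sub hρy.1).traceNorm_add_le (hρy.1.sub hσy.1)
  have htriangle₂ := ((hρx.1.sub hρy.1).add (hρy.1.sub hσy.1)).traceNorm_add_le (hσy.1.sub hσx.1)
  rw [show ρx - ρy + (ρy - σy) + (σy - σx) = ρx - σx by abel, traceNorm_sub_comm σy] at htriangle₂
  have hρ := traceNorm_sub_le_traceNorm_kronecker_sub_left hρx.1 hρy.1 hσx.1 hσy.1 hσxt hσyt
  have hσ := traceNorm_sub_le_traceNorm_kronecker_sub_right hρx.1 hρy.1 hσx.1 hσy.1 hρxt hρyt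
  linarith
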